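/- The 2-form ω on 𝔤₃ is nondegenerate; the operator P satisfies P∘P = Id and ω(PX,PY) = −ω(X,Y) for all X,Y; the (+1)-eigenspace of P is span{e₃,e₄,e₅} and the (−1)-eigenspace is span{e₁,e₂,e₆}; neither eigenspace is closed under the Lie bracket of 𝔤₃; and the bilinear form g(X,Y) = ω(X,PY) is symmetric, nondegenerate, and of signature (3,3) (some basis diagonalizes g with exactly three positive and three negative diagonal entries). -/

import Mathlib

noncomputable section

open LinearMap Module

abbrev V : Type := Fin 6 → ℝ

def e (i : Fin 6) : V := Pi.single i 1

/-!
In the basis `e`, `P` is the diagonal operator `diag(-1, -1, 1, 1, 1, -1)`, and `ω` only pairs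
basis vectors of opposite `P`-sign. Hence `ω (P X) (P Y) = -ω X Y`, so `g = ω(·, P ·)` is
symmetric and `P` is an anti-isometry of `g`; in particular both eigenspaces of `P` are
`g`-isotropic. Since `a15 a23 a46 ≠ 0`, the `(-1)`-eigenspace contains a family `f` that is
`g`-dual to `(e 2, e 3, e 4)`, and then the vectors `e (i + 2) ± f i` form a `g`-orthogonal basis
on which `g` takes the values `2` and `-2`, three times each. This gives the signature and the
nondegeneracy of `g`, hence of `ω`. The brackets `B (e 2) (e 4) = e 5` and `B (e 0) (e 1) = e 3`
leave the respective eigenspaces.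

Indices are shifted by one from the paper: `e i` is its `e_{i+1}`.
-/

open Matrix Module.End

section Diagonal

variable {K ι : Type*} [CommRing K] [Fintype ι] [DecidableEq ι] {s : ι → K}

theorem Matrix.toLin'_diagonal_comp_self (hs : ∀ i, s i = 1 ∨ s i = -1) :
    toLin' (diagonal s) ∘ₗ toLin' (diagonal s) = LinearMap.id := by
  rw [← Matrix.toLin'_mul, diagonal_mul_diagonal, ← Matrix.toLin'_one, ← diagonal_one]
  congr 2
  funext i
  rcases hs i with h | h <;> simp [h]

theorem Matrix.eigenspace_toLin'_diagonal [IsDomain K] (μ : K) :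
    eigenspace (toLin' (diagonal s)) μ = Submodule.span K (Pi.basisFun K ι '' {i | s i = μ}) := by
  ext x
  rw [mem_eigenspace_iff, (Pi.basisFun K ι).mem_span_image, funext_iff]
  simp only [toLin'_apply, mulVec_diagonal, Pi.smul_apply, smul_eq_mul, Set.subset_def,
    Finset.mem_coe, Finsupp.mem_support_iff, Pi.basisFun_repr, Set.mem_ofPred_eq]
  exact forall_congr' fun i => by rw [mul_eq_mul_right_iff, or_iff_not_imp_right]

theorem LinearMap.BilinForm.apply_toLin'_diagonal_eq_neg [Nontrivial K] {ω : LinearMap.BilinForm K (ι → K)}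
    (hs : ∀ i, s i = 1 ∨ s i = -1)
    (hω : ∀ i j, s i = s j → ω (Pi.single i 1) (Pi.single j 1) = 0) (x y : ι → K) :
    ω (toLin' (diagonal s) x) (toLin' (diagonal s) y) = -ω x y := by
  suffices ω.compl₁₂ (toLin' (diagonal s)) (toLin' (diagonal s)) = -ω from
    LinearMap.congr_fun₂ this x y
  refine LinearMap.ext_basis (Pi.basisFun K ι) (Pi.basisFun K ι) fun i j => ?_
  have hD (k : ι) := (hasEigenvector_toLin'_diagonal s k).apply_eq_smul
  rw [compl₁₂_apply, hD, hD, map_smul, map_smul, smul_apply, neg_apply, smul_eq_mul, smul_eq_mul,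
    Pi.basisFun_apply, Pi.basisFun_apply]
  by_cases hij : s i = s j
  · simp [hω i j hij]
  · rcases hs i with hi | hi <;> rcases hs j with hj | hj <;> simp_all

end Diagonal

namespace LinearMap.BilinForm

variable {R M : Type*} [CommRing R] [AddCommGroup M] [Module R M]
  {ω : LinearMap.BilinForm R M} {P : Module.End R M}

theorem apply_eq_zero_of_mem_eigenspace [IsAddTorsionFree R]
    (hanti : ∀ x y, ω (P x) (P y) = -ω x y) {c : R} (hc : c * c = 1) {x y : M}
    (hx : x ∈ eigenspace P c) (hy : y ∈ eigenspace P c) : ω x y = 0 := by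
  have h := hanti x y
  rw [mem_eigenspace_iff.mp hx, mem_eigenspace_iff.mp hy, map_smul, map_smul, smul_apply,
    smul_eq_mul, smul_eq_mul, ← mul_assoc, hc, one_mul] at h
  exact self_eq_neg.mp h

theorem compl₂_apply_comm (hω : ω.IsAlt) (hP : P ∘ₗ P = LinearMap.id)
    (hanti : ∀ x y, ω (P x) (P y) = -ω x y) (x y : M) :
    ω.compl₂ P x y = ω.compl₂ P y x := by
  have hPP : P (P x) = x := LinearMap.congr_fun hP x
  calc ω.compl₂ P x y = ω (P (P x)) (P y) := by rw [hPP]; rfl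
    _ = -ω (P x) y := hanti _ _
    _ = ω.compl₂ P y x := hω.neg_eq _ _

theorem IsAlt.apply_eq_zero_of_forall_lt {ι α : Type*} [LinearOrder ι] (hω : ω.IsAlt) {v : ι → M}
    {s : ι → α} (h : ∀ i j, i < j → s i = s j → ω (v i) (v j) = 0) {i j : ι}
    (hij : s i = s j) : ω (v i) (v j) = 0 := by
  rcases lt_trichotomy i j with hlt | rfl | hgt
  · exact h i j hlt hij
  · exact hω _
  · rw [← hω.neg_eq, h j i hgt hij.symm, neg_zero]

end LinearMap.BilinForm

theorem Module.End.not_forall_apply_mem_eigenspace {R M : Type*} [CommRing R] [IsDomain R]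
    [AddCommGroup M] [Module R M] [Module.IsTorsionFree R M] {P : Module.End R M}
    (B : M →ₗ[R] M →ₗ[R] M) {μ ν : R} (hμν : μ ≠ ν)
    {x y : M} (hx : x ∈ eigenspace P μ) (hy : y ∈ eigenspace P μ)
    (hxy : B x y ∈ eigenspace P ν) (hxy₀ : B x y ≠ 0) :
    ¬ ∀ X ∈ eigenspace P μ, ∀ Y ∈ eigenspace P μ, B X Y ∈ eigenspace P μ :=
  fun h => hxy₀ <| Submodule.disjoint_def.mp ((eigenspaces_iSupIndep P).pairwiseDisjoint hμν) _
    (h x hx y hy) hxy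

section Hyperbolic

variable {K M : Type*} [Field K] [AddCommGroup M] [Module K M] {n : ℕ}
  {g : LinearMap.BilinForm K M} {u w : Fin n → M}

def hyperbolicFamily (u w : Fin n → M) : Fin n ⊕ Fin n → M :=
  Sum.elim (u + w) (u - w)

theorem iIsOrtho_hyperbolicFamily (hg : ∀ x y, g x y = g y x) (huu : ∀ i j, g (u i) (u j) = 0)
    (hww : ∀ i j, g (w i) (w j) = 0) (huw : ∀ i j, g (u i) (w j) = if i = j then 1 else 0) :
    g.iIsOrtho (hyperbolicFamily u w) := by
  rintro (i | i) (j | j) hij <;>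
    simp only [Function.onFun, hyperbolicFamily, Sum.elim_inl, Sum.elim_inr, Pi.add_apply,
      Pi.sub_apply, map_add, map_sub, LinearMap.add_apply, LinearMap.sub_apply, huu, hww, huw,
      hg (w _) (u _)] <;>
    grind

theorem apply_hyperbolicFamily_self (hg : ∀ x y, g x y = g y x) (huu : ∀ i j, g (u i) (u j) = 0)
    (hww : ∀ i j, g (w i) (w j) = 0) (huw : ∀ i j, g (u i) (w j) = if i = j then 1 else 0)
    (a : Fin n ⊕ Fin n) :
    g (hyperbolicFamily u w a) (hyperbolicFamily u w a) =
      Sum.elim (fun _ => 2) (fun _ => -2) a := by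
  rcases a with i | i <;>
    simp only [hyperbolicFamily, Sum.elim_inl, Sum.elim_inr, Pi.add_apply, Pi.sub_apply, map_add,
      map_sub, LinearMap.add_apply, LinearMap.sub_apply, huu, hww, huw, hg (w _) (u _)] <;>
    norm_num

theorem exists_basis_signature_of_hyperbolic [LinearOrder K] [IsStrictOrderedRing K]
    [FiniteDimensional K M] (hn : finrank K M = n + n) (hg : ∀ x y, g x y = g y x)
    (huu : ∀ i j, g (u i) (u j) = 0) (hww : ∀ i j, g (w i) (w j) = 0)
    (huw : ∀ i j, g (u i) (w j) = if i = j then 1 else 0) :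
    ∃ b : Basis (Fin (n + n)) K M, g.iIsOrtho b ∧ (∀ i, g (b i) (b i) ≠ 0) ∧
      Nat.card {i // 0 < g (b i) (b i)} = n ∧ Nat.card {i // g (b i) (b i) < 0} = n := by
  have hself := apply_hyperbolicFamily_self hg huu hww huw
  have hortho := iIsOrtho_hyperbolicFamily hg huu hww huw
  have hli : LinearIndependent K (hyperbolicFamily u w) :=
    LinearMap.BilinForm.linearIndependent_of_iIsOrtho hortho fun a => by
      rcases a with i | i <;> simp [hself]
  have hspan := hli.span_eq_top_of_card_eq_finrank' (by simp [hn])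
  set b := (Basis.mk hli hspan.ge).reindex finSumFinEquiv
  have hb (i : Fin (n + n)) : b i = hyperbolicFamily u w (finSumFinEquiv.symm i) := by simp [b]
  have hcard (p : K → Prop) : Nat.card {i // p (g (b i) (b i))} =
      Nat.card {a // p (Sum.elim (fun _ => 2) (fun _ => -2) a : K)} :=
    Nat.card_congr (finSumFinEquiv.symm.subtypeEquiv fun i => by rw [hb, hself])
  refine ⟨b, fun i j hij => ?_, fun i => ?_, ?_, ?_⟩
  · rw [Function.onFun, hb, hb]
    exact hortho (finSumFinEquiv.symm.injective.ne hij)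
  · rw [hb, hself]
    rcases finSumFinEquiv.symm i with i | i <;> norm_num
  · rw [hcard (0 < ·), Nat.card_congr (Equiv.subtypeEquivRight (q := (· ∈ Set.range Sum.inl))
      (by rintro (a | a) <;> simp)), Nat.card_range_of_injective Sum.inl_injective, Nat.card_fin]
  · rw [hcard (· < 0), Nat.card_congr (Equiv.subtypeEquivRight (q := (· ∈ Set.range Sum.inr))
      (by rintro (a | a) <;> simp)), Nat.card_range_of_injective Sum.inr_injective, Nat.card_fin]

end Hyperbolic

theorem e_ne_zero (i : Fin 6) : e i ≠ 0 := by
  simp [e]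

def sgnP : Fin 6 → ℝ := ![-1, -1, 1, 1, 1, -1]

theorem sgnP_eq_one_or_neg_one (i : Fin 6) : sgnP i = 1 ∨ sgnP i = -1 := by
  fin_cases i <;> simp [sgnP]

theorem toLin'_diagonal_sgnP_e (i : Fin 6) : toLin' (diagonal sgnP) (e i) = sgnP i • e i := by
  simpa only [Pi.basisFun_apply, e] using (hasEigenvector_toLin'_diagonal sgnP i).apply_eq_smul

theorem e_mem_eigenspace_sgnP (i : Fin 6) : e i ∈ eigenspace (toLin' (diagonal sgnP)) (sgnP i) :=
  mem_eigenspace_iff.mpr (toLin'_diagonal_sgnP_e i)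

theorem eq_toLin'_diagonal_sgnP {P : Module.End ℝ V} (hP1 : P (e 0) = -e 0)
    (hP2 : P (e 1) = -e 1) (hP3 : P (e 2) = e 2) (hP4 : P (e 3) = e 3) (hP5 : P (e 4) = e 4)
    (hP6 : P (e 5) = -e 5) : P = toLin' (diagonal sgnP) := by
  refine (Pi.basisFun ℝ (Fin 6)).ext fun i => ?_
  rw [Pi.basisFun_apply]
  change P (e i) = toLin' (diagonal sgnP) (e i)
  rw [toLin'_diagonal_sgnP_e]
  fin_cases i <;> simp [sgnP, hP1, hP2, hP3, hP4, hP5, hP6]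

theorem eigenspace_toLin'_diagonal_sgnP_one :
    eigenspace (toLin' (diagonal sgnP)) 1 = Submodule.span ℝ {e 2, e 3, e 4} := by
  have h : {i | sgnP i = 1} = {2, 3, 4} := by
    ext i
    fin_cases i <;> norm_num [sgnP, Fin.ext_iff]
  rw [Matrix.eigenspace_toLin'_diagonal, h]
  simp [Set.image_insert_eq, e]

theorem eigenspace_toLin'_diagonal_sgnP_neg_one :
    eigenspace (toLin' (diagonal sgnP)) (-1) = Submodule.span ℝ {e 0, e 1, e 5} := by
  have h : {i | sgnP i = -1} = {0, 1, 5} := by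
    ext i
    fin_cases i <;> norm_num [sgnP, Fin.ext_iff]
  rw [Matrix.eigenspace_toLin'_diagonal, h]
  simp [Set.image_insert_eq, e]

theorem apply_e_eq_zero_of_sgnP_eq {ω : LinearMap.BilinForm ℝ V}
    (hωz : ∀ i j : Fin 6, i < j →
      (i, j) ∉ ({(0,2),(0,3),(0,4),(1,2),(1,3),(3,5)} : Set (Fin 6 × Fin 6)) → ω (e i) (e j) = 0)
    (i j : Fin 6) (hij : i < j) (hs : sgnP i = sgnP j) : ω (e i) (e j) = 0 :=
  hωz i j hij (by revert hij hs; fin_cases i <;> fin_cases j <;> norm_num [sgnP, Fin.ext_iff])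

def ePlus : Fin 3 → V := ![e 2, e 3, e 4]

theorem ePlus_mem_eigenspace (i : Fin 3) : ePlus i ∈ eigenspace (toLin' (diagonal sgnP)) 1 := by
  fin_cases i
  exacts [e_mem_eigenspace_sgnP 2, e_mem_eigenspace_sgnP 3, e_mem_eigenspace_sgnP 4]

/-- Coefficients in `(e 0, e 1, e 5)`: the rows of the inverse of the matrix `(ω (e m) (e k))`,
`m ∈ {0, 1, 5}`, `k ∈ {2, 3, 4}`. -/
def ePlusDual (a13 a14 a15 a23 a24 a46 : ℝ) : Fin 3 → V :=
  ![a23⁻¹ • e 1 + (a24 / (a23 * a46)) • e 5,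
    -a46⁻¹ • e 5,
    a15⁻¹ • e 0 - (a13 / (a15 * a23)) • e 1 + ((a14 * a23 - a13 * a24) / (a15 * a23 * a46)) • e 5]

theorem ePlusDual_mem_eigenspace (a13 a14 a15 a23 a24 a46 : ℝ) (i : Fin 3) :
    ePlusDual a13 a14 a15 a23 a24 a46 i ∈ eigenspace (toLin' (diagonal sgnP)) (-1) := by
  have h0 : e 0 ∈ eigenspace (toLin' (diagonal sgnP)) (-1) := e_mem_eigenspace_sgnP 0
  have h1 : e 1 ∈ eigenspace (toLin' (diagonal sgnP)) (-1) := e_mem_eigenspace_sgnP 1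
  have h5 : e 5 ∈ eigenspace (toLin' (diagonal sgnP)) (-1) := e_mem_eigenspace_sgnP 5
  fin_cases i <;> simp only [ePlusDual, Fin.reduceFinMk, Matrix.cons_val] <;>
    apply_rules [add_mem, sub_mem, neg_mem, Submodule.smul_mem]

theorem apply_ePlusDual_ePlus {a13 a14 a15 a23 a24 a46 : ℝ} (ha15 : a15 ≠ 0) (ha23 : a23 ≠ 0)
    (ha46 : a46 ≠ 0) {ω : LinearMap.BilinForm ℝ V} (hωalt : ω.IsAlt)
    (hω1 : ω (e 0) (e 2) = a13) (hω2 : ω (e 0) (e 3) = a14) (hω3 : ω (e 0) (e 4) = a15)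
    (hω4 : ω (e 1) (e 2) = a23) (hω5 : ω (e 1) (e 3) = a24) (hω6 : ω (e 3) (e 5) = a46)
    (hωz : ∀ i j : Fin 6, i < j →
      (i, j) ∉ ({(0,2),(0,3),(0,4),(1,2),(1,3),(3,5)} : Set (Fin 6 × Fin 6)) → ω (e i) (e j) = 0)
    (i j : Fin 3) :
    ω (ePlusDual a13 a14 a15 a23 a24 a46 i) (ePlus j) = if i = j then 1 else 0 := by
  have h14 : ω (e 1) (e 4) = 0 := hωz 1 4 (by decide) (by simp)
  have h52 : ω (e 5) (e 2) = 0 := by rw [← hωalt.neg_eq, hωz 2 5 (by decide) (by simp), neg_zero]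
  have h53 : ω (e 5) (e 3) = -a46 := by rw [← hωalt.neg_eq, hω6]
  have h54 : ω (e 5) (e 4) = 0 := by rw [← hωalt.neg_eq, hωz 4 5 (by decide) (by simp), neg_zero]
  fin_cases i <;> fin_cases j <;>
    simp [ePlusDual, ePlus, hω1, hω2, hω3, hω4, hω5, h14, h52, h53, h54] <;> field_simp <;> ring

theorem stmt_14_general
    (a13 a14 a15 a23 a24 a46 : ℝ)
    (ha15 : a15 ≠ 0) (ha23 : a23 ≠ 0) (ha46 : a46 ≠ 0)
    (B : V →ₗ[ℝ] V →ₗ[ℝ] V)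
    (hB1 : B (e 0) (e 1) = e 3)
    (hB4 : B (e 2) (e 4) = e 5)
    (ω : V →ₗ[ℝ] V →ₗ[ℝ] ℝ)
    (hωalt : ∀ X, ω X X = 0)
    (hω1 : ω (e 0) (e 2) = a13)
    (hω2 : ω (e 0) (e 3) = a14)
    (hω3 : ω (e 0) (e 4) = a15)
    (hω4 : ω (e 1) (e 2) = a23)
    (hω5 : ω (e 1) (e 3) = a24)
    (hω6 : ω (e 3) (e 5) = a46)
    (hωz : ∀ i j : Fin 6, i < j → (i, j) ∉ ({(0,2),(0,3),(0,4),(1,2),(1,3),(3,5)} : Set (Fin 6 × Fin 6)) → ω (e i) (e j) = 0)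
    (P : Module.End ℝ V)
    (hP1 : P (e 0) = -e 0)
    (hP2 : P (e 1) = -e 1)
    (hP3 : P (e 2) = e 2)
    (hP4 : P (e 3) = e 3)
    (hP5 : P (e 4) = e 4)
    (hP6 : P (e 5) = -e 5)
    (g : V →ₗ[ℝ] V →ₗ[ℝ] ℝ)
    (hg : ∀ X Y, g X Y = ω X (P Y))
    (Ep Em : Submodule ℝ V)
    (hEp : Ep = Submodule.span ℝ ({(e 2 : V), (e 3 : V), (e 4 : V)} : Set V))
    (hEm : Em = Submodule.span ℝ ({(e 0 : V), (e 1 : V), (e 5 : V)} : Set V)) :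
    (∀ X : V, (∀ Y, ω X Y = 0) → X = 0) ∧
    P ∘ₗ P = LinearMap.id ∧
    (∀ X Y, ω (P X) (P Y) = - ω X Y) ∧
    Module.End.eigenspace P 1 = Ep ∧
    Module.End.eigenspace P (-1) = Em ∧
    ¬ (∀ X ∈ Ep, ∀ Y ∈ Ep, B X Y ∈ Ep) ∧
    ¬ (∀ X ∈ Em, ∀ Y ∈ Em, B X Y ∈ Em) ∧
    (∀ X Y, g X Y = g Y X) ∧
    (∀ X : V, (∀ Y, g X Y = 0) → X = 0) ∧
    (∃ b : Basis (Fin 6) ℝ V,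
      (∀ i j, i ≠ j → g (b i) (b j) = 0) ∧
      Nat.card {i : Fin 6 // 0 < g (b i) (b i)} = 3 ∧
      Nat.card {i : Fin 6 // g (b i) (b i) < 0} = 3) := by
  obtain rfl := eq_toLin'_diagonal_sgnP hP1 hP2 hP3 hP4 hP5 hP6
  obtain rfl : g = ω.compl₂ (toLin' (diagonal sgnP)) := LinearMap.ext₂ hg
  subst hEp hEm
  set P := toLin' (diagonal sgnP)
  rw [← eigenspace_toLin'_diagonal_sgnP_one, ← eigenspace_toLin'_diagonal_sgnP_neg_one]
  have hPP : P ∘ₗ P = LinearMap.id := toLin'_diagonal_comp_self sgnP_eq_one_or_neg_one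
  have hanti : ∀ X Y, ω (P X) (P Y) = -ω X Y :=
    LinearMap.BilinForm.apply_toLin'_diagonal_eq_neg sgnP_eq_one_or_neg_one fun i j =>
      LinearMap.BilinForm.IsAlt.apply_eq_zero_of_forall_lt hωalt (apply_e_eq_zero_of_sgnP_eq hωz)
  have hgsymm := LinearMap.BilinForm.compl₂_apply_comm hωalt hPP hanti
  have hganti : ∀ X Y, ω.compl₂ P (P X) (P Y) = -ω.compl₂ P X Y := fun X Y => hanti X (P Y)
  obtain ⟨b, hortho, hne, hpos, hneg⟩ := exists_basis_signature_of_hyperbolic (n := 3) (by simp)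
    hgsymm
    (fun i j => LinearMap.BilinForm.apply_eq_zero_of_mem_eigenspace hganti (by norm_num)
      (ePlusDual_mem_eigenspace _ _ _ _ _ _ i) (ePlusDual_mem_eigenspace _ _ _ _ _ _ j))
    (fun i j => LinearMap.BilinForm.apply_eq_zero_of_mem_eigenspace hganti (by norm_num)
      (ePlus_mem_eigenspace i) (ePlus_mem_eigenspace j))
    (fun i j => by
      rw [compl₂_apply, mem_eigenspace_iff.mp (ePlus_mem_eigenspace j), one_smul]
      exact apply_ePlusDual_ePlus ha15 ha23 ha46 hωalt hω1 hω2 hω3 hω4 hω5 hω6 hωz i j)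
  have hgnd := ((LinearMap.BilinForm.iIsOrtho.nondegenerate_iff_not_isOrtho_basis_self _ b
    hortho).2 hne).1
  refine ⟨fun X hX => hgnd X fun Y => hX _, hPP, hanti, rfl, rfl, ?_, ?_, hgsymm, hgnd, b, hortho,
    hpos, hneg⟩
  · apply Module.End.not_forall_apply_mem_eigenspace B (μ := 1) (ν := -1) (by norm_num)
      (e_mem_eigenspace_sgnP 2) (e_mem_eigenspace_sgnP 4) <;> rw [hB4]
    exacts [e_mem_eigenspace_sgnP 5, e_ne_zero 5]
  · apply Module.End.not_forall_apply_mem_eigenspace B (μ := -1) (ν := 1) (by norm_num)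
      (e_mem_eigenspace_sgnP 0) (e_mem_eigenspace_sgnP 1) <;> rw [hB1]
    exacts [e_mem_eigenspace_sgnP 3, e_ne_zero 3]

theorem stmt_14
    (a13 a14 a15 a23 a24 a46 : ℝ)
    (ha15 : a15 ≠ 0) (ha23 : a23 ≠ 0) (ha46 : a46 ≠ 0)
    (B : V →ₗ[ℝ] V →ₗ[ℝ] V)
    (hBanti : ∀ X Y, B X Y = - B Y X)
    (hB1 : B (e 0) (e 1) = e 3)
    (hB2 : B (e 0) (e 2) = e 4)
    (hB3 : B (e 0) (e 3) = e 5)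
    (hB4 : B (e 2) (e 4) = e 5)
    (hBz : ∀ i j : Fin 6, i < j → (i, j) ∉ ({(0,1),(0,2),(0,3),(2,4)} : Set (Fin 6 × Fin 6)) → B (e i) (e j) = 0)
    (ω : V →ₗ[ℝ] V →ₗ[ℝ] ℝ)
    (hωalt : ∀ X, ω X X = 0)
    (hω1 : ω (e 0) (e 2) = a13)
    (hω2 : ω (e 0) (e 3) = a14)
    (hω3 : ω (e 0) (e 4) = a15)
    (hω4 : ω (e 1) (e 2) = a23)
    (hω5 : ω (e 1) (e 3) = a24)
    (hω6 : ω (e 3) (e 5) = a46)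
    (hωz : ∀ i j : Fin 6, i < j → (i, j) ∉ ({(0,2),(0,3),(0,4),(1,2),(1,3),(3,5)} : Set (Fin 6 × Fin 6)) → ω (e i) (e j) = 0)
    (P : Module.End ℝ V)
    (hP1 : P (e 0) = -e 0)
    (hP2 : P (e 1) = -e 1)
    (hP3 : P (e 2) = e 2)
    (hP4 : P (e 3) = e 3)
    (hP5 : P (e 4) = e 4)
    (hP6 : P (e 5) = -e 5)
    (g : V →ₗ[ℝ] V →ₗ[ℝ] ℝ)
    (hg : ∀ X Y, g X Y = ω X (P Y))
    (Ep Em : Submodule ℝ V)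
    (hEp : Ep = Submodule.span ℝ ({(e 2 : V), (e 3 : V), (e 4 : V)} : Set V))
    (hEm : Em = Submodule.span ℝ ({(e 0 : V), (e 1 : V), (e 5 : V)} : Set V)) :
    (∀ X : V, (∀ Y, ω X Y = 0) → X = 0) ∧
    P ∘ₗ P = LinearMap.id ∧
    (∀ X Y, ω (P X) (P Y) = - ω X Y) ∧
    Module.End.eigenspace P 1 = Ep ∧
    Module.End.eigenspace P (-1) = Em ∧
    ¬ (∀ X ∈ Ep, ∀ Y ∈ Ep, B X Y ∈ Ep) ∧
    ¬ (∀ X ∈ Em, ∀ Y ∈ Em, B X Y ∈ Em) ∧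
    (∀ X Y, g X Y = g Y X) ∧
    (∀ X : V, (∀ Y, g X Y = 0) → X = 0) ∧
    (∃ b : Basis (Fin 6) ℝ V,
      (∀ i j, i ≠ j → g (b i) (b j) = 0) ∧
      Nat.card {i : Fin 6 // 0 < g (b i) (b i)} = 3 ∧
      Nat.card {i : Fin 6 // g (b i) (b i) < 0} = 3) :=
  stmt_14_general a13 a14 a15 a23 a24 a46 ha15 ha23 ha46 B hB1 hB4 ω hωalt hω1 hω2 hω3 hω4 hω5 hω6
    hωz P hP1 hP2 hP3 hP4 hP5 hP6 g hg Ep Em hEp hEm
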